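/- Let 0<λ<1 and b∈D. Define f_b(z) = (1-|b|^2)^{(1-λ)/2}(φ_b(z) - b), where φ_b(z)=(b-z)/(1-b̄ z). Then there is a constant C depending only on λ (not on b) such that sup_{a∈D}(1-|a|^2)^{1-λ}∫_D |f_b'(z)|^2(1-|φ_a(z)|^2)dm(z) ≤ C. -/

import Mathlib

/-!
`φ_b` is an involution of the disk, so `|φ_b'|²`, the Jacobian of `φ_b` as a map of `ℝ²`, has
integral `m(D) = 1` over `D` by the change of variables formula. Since
`0 ≤ 1 - |φ_a|² ≤ 1` and `(1 - |a|²)^{1-λ} ≤ 1`, the Morrey quantity of `f_b` is at most its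
Dirichlet integral `(1 - |b|²)^{1-λ} ∫_D |φ_b'|² dm ≤ 1`, so `C = 1` works.
-/

open MeasureTheory Real Set Filter Topology

noncomputable section

/-- The open unit disk in ℂ. -/
def UD : Set ℂ := Metric.ball 0 1

/-- The Möbius map φ_a(z) = (a - z)/(1 - ā z). -/
def moeb (a z : ℂ) : ℂ := (a - z) / (1 - (starRingEnd ℂ) a * z)

/-- The Morrey quantity (1-|a|²)^{1-λ} ∫_D |f'(z)|² (1-|φ_a(z)|²) dm(z),
with dm normalized area measure (1/π)·(Lebesgue measure). -/
def morreyInt (lam : ℝ) (f : ℂ → ℂ) (a : ℂ) : ℝ :=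
  (1 - ‖a‖ ^ 2) ^ (1 - lam) *
    (π⁻¹ * ∫ z in UD, ‖deriv f z‖ ^ 2 * (1 - ‖moeb a z‖ ^ 2))

open Complex ComplexConjugate

theorem Complex.det_smulRight_restrictScalars (w : ℂ) :
    ((ContinuousLinearMap.smulRight (1 : ℂ →L[ℂ] ℂ) w).restrictScalars ℝ).det = ‖w‖ ^ 2 := by
  simp [ContinuousLinearMap.det, LinearMap.det_restrictScalars, Algebra.norm_complex_eq,
    Complex.normSq_eq_norm_sq]

theorem integral_norm_deriv_sq_eq_volume_image {f f' : ℂ → ℂ} {s : Set ℂ}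
    (hs : MeasurableSet s) (hf : ∀ z ∈ s, HasDerivAt f (f' z) z) (hinj : InjOn f s)
    (hfin : volume (f '' s) ≠ ⊤) :
    IntegrableOn (fun z => ‖f' z‖ ^ 2) s ∧ ∫ z in s, ‖f' z‖ ^ 2 = volume.real (f '' s) := by
  have hf' : ∀ z ∈ s, HasFDerivWithinAt f
      ((ContinuousLinearMap.smulRight (1 : ℂ →L[ℂ] ℂ) (f' z)).restrictScalars ℝ) s z :=
    fun z hz => ((hf z hz).hasFDerivAt.restrictScalars ℝ).hasFDerivWithinAt
  have hint := integrableOn_image_iff_integrableOn_abs_det_fderiv_smul volume hs hf' hinj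
    (fun _ => (1 : ℝ))
  have heq := integral_image_eq_integral_abs_det_fderiv_smul volume hs hf' hinj (fun _ => (1 : ℝ))
  simp only [Complex.det_smulRight_restrictScalars, smul_eq_mul, mul_one, abs_pow, abs_norm]
    at hint heq
  refine ⟨hint.mp (integrableOn_const hfin), ?_⟩
  rw [← heq, setIntegral_const, smul_eq_mul, mul_one]

theorem mem_UD_iff {z : ℂ} : z ∈ UD ↔ ‖z‖ < 1 := mem_ball_zero_iff

theorem one_sub_norm_sq_pos {z : ℂ} (hz : z ∈ UD) : 0 < 1 - ‖z‖ ^ 2 := by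
  nlinarith [mem_UD_iff.mp hz, norm_nonneg z]

theorem one_sub_norm_sq_rpow_le_one {z : ℂ} (hz : z ∈ UD) {p : ℝ} (hp : 0 ≤ p) :
    (1 - ‖z‖ ^ 2) ^ p ≤ 1 :=
  Real.rpow_le_one (one_sub_norm_sq_pos hz).le (by linarith [sq_nonneg ‖z‖]) hp

theorem volume_real_UD : volume.real UD = π := by
  simp [UD, measureReal_def]

theorem normSq_one_sub_conj_mul_sub_normSq_sub (a z : ℂ) :
    normSq (1 - conj a * z) - normSq (a - z) = (1 - normSq a) * (1 - normSq z) := by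
  simp only [normSq_apply, sub_re, sub_im, mul_re, mul_im, conj_re, conj_im, one_re, one_im]
  ring

theorem one_sub_conj_mul_ne_zero {a z : ℂ} (ha : a ∈ UD) (hz : z ∈ UD) : 1 - conj a * z ≠ 0 := by
  rw [mem_UD_iff] at ha hz
  have hlt : ‖conj a * z‖ < 1 := by
    rw [norm_mul, Complex.norm_conj]
    nlinarith [norm_nonneg a, norm_nonneg z]
  intro h
  rw [← sub_eq_zero.mp h] at hlt
  simp at hlt

theorem moeb_mem_UD {a z : ℂ} (ha : a ∈ UD) (hz : z ∈ UD) : moeb a z ∈ UD := by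
  have hne := one_sub_conj_mul_ne_zero ha hz
  have key := normSq_one_sub_conj_mul_sub_normSq_sub a z
  have hpos := mul_pos (one_sub_norm_sq_pos ha) (one_sub_norm_sq_pos hz)
  simp only [normSq_eq_norm_sq] at key
  rw [mem_UD_iff, moeb, norm_div, div_lt_one (norm_pos_iff.mpr hne)]
  exact lt_of_pow_lt_pow_left₀ 2 (norm_nonneg _) (by linarith)

theorem moeb_moeb {a z : ℂ} (ha : a ∈ UD) (hz : z ∈ UD) : moeb a (moeb a z) = z := by
  have hD := one_sub_conj_mul_ne_zero ha hz
  have ha' : 1 - conj a * a ≠ 0 := one_sub_conj_mul_ne_zero ha ha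
  have hnum : a - moeb a z = z * (1 - conj a * a) / (1 - conj a * z) := by
    rw [moeb, eq_div_iff hD, sub_mul, div_mul_cancel₀ _ hD]; ring
  have hden : 1 - conj a * moeb a z = (1 - conj a * a) / (1 - conj a * z) := by
    rw [moeb, eq_div_iff hD, sub_mul, mul_assoc, div_mul_cancel₀ _ hD]; ring
  rw [moeb, hnum, hden, div_div_div_cancel_right₀ hD, mul_div_cancel_right₀ _ ha']

theorem image_moeb_UD {a : ℂ} (ha : a ∈ UD) : moeb a '' UD = UD :=
  Subset.antisymm (image_subset_iff.mpr fun _ hz => moeb_mem_UD ha hz)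
    fun z hz => ⟨moeb a z, moeb_mem_UD ha hz, moeb_moeb ha hz⟩

theorem injOn_moeb {a : ℂ} (ha : a ∈ UD) : InjOn (moeb a) UD :=
  fun z hz w hw h => by rw [← moeb_moeb ha hz, h, moeb_moeb ha hw]

theorem hasDerivAt_moeb {a z : ℂ} (hne : 1 - conj a * z ≠ 0) :
    HasDerivAt (moeb a) ((conj a * a - 1) / (1 - conj a * z) ^ 2) z := by
  have hnum : HasDerivAt (fun w : ℂ => a - w) (-1) z := (hasDerivAt_id z).const_sub a
  have hden : HasDerivAt (fun w : ℂ => 1 - conj a * w) (-conj a) z := by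
    simpa using ((hasDerivAt_id z).const_mul (conj a)).const_sub 1
  exact (hnum.div hden hne).congr_deriv (by ring)

theorem integral_norm_deriv_moeb_sq {a : ℂ} (ha : a ∈ UD) :
    IntegrableOn (fun z => ‖deriv (moeb a) z‖ ^ 2) UD ∧
      ∫ z in UD, ‖deriv (moeb a) z‖ ^ 2 = π := by
  have hderiv : ∀ z ∈ UD, HasDerivAt (moeb a) (deriv (moeb a) z) z := fun z hz =>
    (hasDerivAt_moeb (one_sub_conj_mul_ne_zero ha hz)).differentiableAt.hasDerivAt
  have hvol : volume (moeb a '' UD) ≠ ⊤ := by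
    rw [image_moeb_UD ha]
    exact measure_ball_lt_top.ne
  have := integral_norm_deriv_sq_eq_volume_image (s := UD) measurableSet_ball hderiv
    (injOn_moeb ha) hvol
  rwa [image_moeb_UD ha, volume_real_UD] at this

def dirichletInt (f : ℂ → ℂ) : ℝ := π⁻¹ * ∫ z in UD, ‖deriv f z‖ ^ 2

theorem morreyInt_le_dirichletInt {lam : ℝ} (hlam : lam ≤ 1) {f : ℂ → ℂ} {a : ℂ} (ha : a ∈ UD)
    (hf : IntegrableOn (fun z => ‖deriv f z‖ ^ 2) UD) :
    morreyInt lam f a ≤ dirichletInt f := by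
  have hmoeb : ∀ z ∈ UD, 0 ≤ 1 - ‖moeb a z‖ ^ 2 ∧ 1 - ‖moeb a z‖ ^ 2 ≤ 1 := fun z hz =>
    ⟨(one_sub_norm_sq_pos (moeb_mem_UD ha hz)).le, by linarith [sq_nonneg ‖moeb a z‖]⟩
  have hint : ∫ z in UD, ‖deriv f z‖ ^ 2 * (1 - ‖moeb a z‖ ^ 2) ≤ ∫ z in UD, ‖deriv f z‖ ^ 2 :=
    integral_mono_of_nonneg
      (ae_restrict_of_forall_mem measurableSet_ball fun z hz =>
        mul_nonneg (sq_nonneg _) (hmoeb z hz).1)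
      hf
      (ae_restrict_of_forall_mem measurableSet_ball fun z hz =>
        mul_le_of_le_one_right (sq_nonneg _) (hmoeb z hz).2)
  have hnonneg : 0 ≤ π⁻¹ * ∫ z in UD, ‖deriv f z‖ ^ 2 * (1 - ‖moeb a z‖ ^ 2) :=
    mul_nonneg (inv_nonneg.mpr pi_pos.le) (setIntegral_nonneg measurableSet_ball fun z hz =>
      mul_nonneg (sq_nonneg _) (hmoeb z hz).1)
  calc morreyInt lam f a ≤ π⁻¹ * ∫ z in UD, ‖deriv f z‖ ^ 2 * (1 - ‖moeb a z‖ ^ 2) :=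
        mul_le_of_le_one_left hnonneg (one_sub_norm_sq_rpow_le_one ha (by linarith))
    _ ≤ dirichletInt f := mul_le_mul_of_nonneg_left hint (inv_nonneg.mpr pi_pos.le)

theorem dirichletInt_const_mul_moeb_sub {a : ℂ} (ha : a ∈ UD) (c d : ℂ) :
    dirichletInt (fun z => c * (moeb a z - d)) = ‖c‖ ^ 2 := by
  simp only [dirichletInt, deriv_const_mul_field', deriv_sub_const_fun, norm_mul, mul_pow,
    integral_const_mul, (integral_norm_deriv_moeb_sq ha).2]
  field_simp

theorem stmt4_general (lam : ℝ) (h1 : lam < 1) :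
    ∃ C : ℝ, ∀ b ∈ UD, ∀ a ∈ UD,
      morreyInt lam
        (fun z => (((1 - ‖b‖ ^ 2) ^ ((1 - lam) / 2) : ℝ) : ℂ) * (moeb b z - b)) a ≤ C := by
  refine ⟨1, fun b hb a ha => ?_⟩
  have hint : IntegrableOn (fun z => ‖deriv
      (fun z => (((1 - ‖b‖ ^ 2) ^ ((1 - lam) / 2) : ℝ) : ℂ) * (moeb b z - b)) z‖ ^ 2) UD := by
    simp only [deriv_const_mul_field', deriv_sub_const_fun, norm_mul, mul_pow]
    exact (integral_norm_deriv_moeb_sq hb).1.const_mul _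
  calc _ ≤ _ := morreyInt_le_dirichletInt h1.le ha hint
    _ = ‖(((1 - ‖b‖ ^ 2) ^ ((1 - lam) / 2) : ℝ) : ℂ)‖ ^ 2 := dirichletInt_const_mul_moeb_sub hb _ _
    _ ≤ 1 := by
      rw [Complex.norm_real, Real.norm_eq_abs, sq_abs]
      exact pow_le_one₀ (Real.rpow_nonneg (one_sub_norm_sq_pos hb).le _)
        (one_sub_norm_sq_rpow_le_one hb (by linarith))

/-- the test functions f_b(z) = (1-|b|²)^{(1-λ)/2}(φ_b(z)-b) have
Morrey seminorms bounded by a constant depending only on λ. -/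
theorem stmt4 (lam : ℝ) (h0 : 0 < lam) (h1 : lam < 1) :
    ∃ C : ℝ, ∀ b ∈ UD, ∀ a ∈ UD,
      morreyInt lam
        (fun z => (((1 - ‖b‖ ^ 2) ^ ((1 - lam) / 2) : ℝ) : ℂ) * (moeb b z - b)) a ≤ C :=
  stmt4_general lam h1
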